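/- Let g₁,…,g_m ∈ ℝ[u₁,…,u_k] admit an algebraic certificate of compactness, and let D = {u ∈ ℝᵏ : gᵢ(u) ≥ 0 for all i} be nonempty. Then for every polynomial f ∈ ℝ[u₁,…,u_k], the supremum of the set {λ ∈ ℝ : there exist SOS polynomials s₀, s₁,…,s_m with f − λ = s₀ + Σᵢ sᵢ gᵢ} equals the minimum of f over D (which is attained since D is compact). -/

import Mathlib

/-!
Let `M` be the quadratic module generated by the `gᵢ`. As `N - ∑ uⱼ² ∈ M`, every coordinate, hence
every polynomial, is bounded by a constant modulo `M` (`M` is Archimedean), and `D` is compact, so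
`f` attains its minimum `f*` on `D`. Evaluating a certificate at a minimiser shows `λ ≤ f*`.

Conversely, Putinar's Positivstellensatz gives `f - (f* - ε) ∈ M` for all `ε > 0`, by Jacobi's
argument applied to `a = f - f* + ε/2`. If `-1` were not in `M - Σ R² · a`, Zorn's lemma would
extend this module to a maximal proper one, which is an Archimedean semiordering `T`; then
`p ↦ inf {r | r - p ∈ T}` is a ring homomorphism to `ℝ`, that is, evaluation at a point of `D`
where `a ≤ 0`, which is impossible. Hence `a σ = 1 + t` with `σ` a sum of squares and `t ∈ M`, and
Newton's iteration for `(1 + t)^(-1/2)`, run inside the preordering generated by `t` and `κ - t`,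
turns this relation into `a + ε/2 ∈ M`.
-/

open MvPolynomial

/-- A real multivariate polynomial is a sum of squares. -/
def IsSOS {k : ℕ} (s : MvPolynomial (Fin k) ℝ) : Prop :=
  ∃ (r : ℕ) (p : Fin r → MvPolynomial (Fin k) ℝ), s = ∑ i, p i ^ 2

-- below, `(c : R)` for `c : ℝ` stands for `algebraMap ℝ R c`
open scoped algebraMap

theorem isSOS_iff_isSumSq {k : ℕ} (s : MvPolynomial (Fin k) ℝ) : IsSOS s ↔ IsSumSq s := by
  constructor
  · rintro ⟨r, p, rfl⟩
    exact IsSumSq.sum_sq _ p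
  · intro hs
    induction hs with
    | zero => exact ⟨0, ![], by simp⟩
    | sq_add a _ ih =>
      obtain ⟨r, p, rfl⟩ := ih
      exact ⟨r + 1, Fin.cons a p, by simp [Fin.sum_univ_succ, sq]⟩

section CommRing

variable {R : Type*} [CommRing R]

structure IsQuadraticModule (M : Set R) : Prop where
  add_mem {x y : R} : x ∈ M → y ∈ M → x + y ∈ M
  mul_mem {σ x : R} : IsSumSq σ → x ∈ M → σ * x ∈ M
  one_mem : (1 : R) ∈ M

namespace IsQuadraticModule

variable {M : Set R}

theorem mem_of_isSumSq (hM : IsQuadraticModule M) {σ : R} (hσ : IsSumSq σ) : σ ∈ M := by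
  simpa using hM.mul_mem hσ hM.one_mem

theorem sq_mem (hM : IsQuadraticModule M) (p : R) : p ^ 2 ∈ M :=
  hM.mem_of_isSumSq (by simp [sq])

theorem zero_mem (hM : IsQuadraticModule M) : (0 : R) ∈ M := hM.mem_of_isSumSq .zero

theorem sq_mul_mem (hM : IsQuadraticModule M) (p : R) {x : R} (hx : x ∈ M) : p ^ 2 * x ∈ M :=
  hM.mul_mem (by simp [sq]) hx

end IsQuadraticModule

def sumSqAdjoin (M : Set R) (d : R) : Set R :=
  {x | ∃ s ∈ M, ∃ σ, IsSumSq σ ∧ x = s + σ * d}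

theorem subset_sumSqAdjoin (M : Set R) (d : R) :
    M ⊆ sumSqAdjoin M d :=
  fun x hx => ⟨x, hx, 0, .zero, by ring⟩

theorem mem_sumSqAdjoin_self {M : Set R} (hM : IsQuadraticModule M) (d : R) :
    d ∈ sumSqAdjoin M d :=
  ⟨0, hM.zero_mem, 1, .one, by ring⟩

theorem isQuadraticModule_sumSqAdjoin {M : Set R} (hM : IsQuadraticModule M) (d : R) :
    IsQuadraticModule (sumSqAdjoin M d) where
  add_mem := by
    rintro _ _ ⟨s, hs, σ, hσ, rfl⟩ ⟨t, ht, τ, hτ, rfl⟩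
    exact ⟨s + t, hM.add_mem hs ht, σ + τ, hσ.add hτ, by ring⟩
  mul_mem := by
    rintro ρ _ hρ ⟨s, hs, σ, hσ, rfl⟩
    exact ⟨ρ * s, hM.mul_mem hρ hs, ρ * σ, hρ.mul hσ, by ring⟩
  one_mem := subset_sumSqAdjoin M d hM.one_mem

theorem IsQuadraticModule.exists_maximal_proper {M : Set R} (hM : IsQuadraticModule M)
    (hM₁ : (-1 : R) ∉ M) :
    ∃ T, M ⊆ T ∧ Maximal (fun T : Set R => IsQuadraticModule T ∧ (-1 : R) ∉ T) T := by
  refine zorn_subset_nonempty _ (fun c hc hchain ⟨t₀, ht₀⟩ => ?_) M ⟨hM, hM₁⟩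
  refine ⟨⋃₀ c, ⟨⟨?_, ?_, ⟨t₀, ht₀, (hc ht₀).1.one_mem⟩⟩, ?_⟩,
    fun t ht => Set.subset_sUnion_of_mem ht⟩
  · rintro x y ⟨t₁, ht₁, hx⟩ ⟨t₂, ht₂, hy⟩
    rcases hchain.total ht₁ ht₂ with h | h
    · exact ⟨t₂, ht₂, (hc ht₂).1.add_mem (h hx) hy⟩
    · exact ⟨t₁, ht₁, (hc ht₁).1.add_mem hx (h hy)⟩
  · rintro σ x hσ ⟨t, ht, hx⟩
    exact ⟨t, ht, (hc ht).1.mul_mem hσ hx⟩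
  · rintro ⟨t, ht, h⟩
    exact (hc ht).2 h

theorem IsQuadraticModule.neg_one_mem_sumSqAdjoin_of_maximal {T : Set R}
    (hT : Maximal (fun T : Set R => IsQuadraticModule T ∧ (-1 : R) ∉ T) T) {d : R}
    (hd : d ∉ T) : (-1 : R) ∈ sumSqAdjoin T d := by
  by_contra h
  exact hd (hT.2 ⟨isQuadraticModule_sumSqAdjoin hT.1.1 d, h⟩ (subset_sumSqAdjoin T d)
    (mem_sumSqAdjoin_self hT.1.1 d))

def preorderingSpan (t w : R) : Set R :=
  {x | ∃ σ₀ σ₁ σ₂ σ₃, IsSumSq σ₀ ∧ IsSumSq σ₁ ∧ IsSumSq σ₂ ∧ IsSumSq σ₃ ∧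
    x = σ₀ + σ₁ * t + σ₂ * w + σ₃ * (t * w)}

section

variable {t w : R}

theorem mem_preorderingSpan_of_isSumSq {σ : R} (hσ : IsSumSq σ) : σ ∈ preorderingSpan t w :=
  ⟨σ, 0, 0, 0, hσ, .zero, .zero, .zero, by ring⟩

theorem add_mem_preorderingSpan {x y : R} (hx : x ∈ preorderingSpan t w)
    (hy : y ∈ preorderingSpan t w) : x + y ∈ preorderingSpan t w := by
  obtain ⟨σ₀, σ₁, σ₂, σ₃, h₀, h₁, h₂, h₃, rfl⟩ := hx
  obtain ⟨τ₀, τ₁, τ₂, τ₃, g₀, g₁, g₂, g₃, rfl⟩ := hy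
  exact ⟨σ₀ + τ₀, σ₁ + τ₁, σ₂ + τ₂, σ₃ + τ₃, h₀.add g₀, h₁.add g₁, h₂.add g₂, h₃.add g₃,
    by ring⟩

theorem mul_mem_preorderingSpan {x y : R} (hx : x ∈ preorderingSpan t w)
    (hy : y ∈ preorderingSpan t w) : x * y ∈ preorderingSpan t w := by
  obtain ⟨σ₀, σ₁, σ₂, σ₃, h₀, h₁, h₂, h₃, rfl⟩ := hx
  obtain ⟨τ₀, τ₁, τ₂, τ₃, g₀, g₁, g₂, g₃, rfl⟩ := hy
  have ht : IsSumSq (t ^ 2) := by simp [sq]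
  have hw : IsSumSq (w ^ 2) := by simp [sq]
  refine ⟨σ₀ * τ₀ + t ^ 2 * (σ₁ * τ₁) + w ^ 2 * (σ₂ * τ₂) + t ^ 2 * w ^ 2 * (σ₃ * τ₃),
    σ₀ * τ₁ + σ₁ * τ₀ + w ^ 2 * (σ₂ * τ₃ + σ₃ * τ₂),
    σ₀ * τ₂ + σ₂ * τ₀ + t ^ 2 * (σ₁ * τ₃ + σ₃ * τ₁),
    σ₀ * τ₃ + σ₃ * τ₀ + σ₁ * τ₂ + σ₂ * τ₁, ?_, ?_, ?_, ?_, by ring⟩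
  · exact (((h₀.mul g₀).add (ht.mul (h₁.mul g₁))).add (hw.mul (h₂.mul g₂))).add
      ((ht.mul hw).mul (h₃.mul g₃))
  · exact ((h₀.mul g₁).add (h₁.mul g₀)).add (hw.mul ((h₂.mul g₃).add (h₃.mul g₂)))
  · exact ((h₀.mul g₂).add (h₂.mul g₀)).add (ht.mul ((h₁.mul g₃).add (h₃.mul g₁)))
  · exact (((h₀.mul g₃).add (h₃.mul g₀)).add (h₁.mul g₂)).add (h₂.mul g₁)

end

variable {ι : Type*} [Fintype ι]

theorem IsSumSq.map {S F : Type*} [CommRing S] [FunLike F R S] [RingHomClass F R S] (φ : F)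
    {s : R} (hs : IsSumSq s) : IsSumSq (φ s) := by
  induction hs with
  | zero => simp
  | sq_add a _ ih => rw [map_add, map_mul]; exact .sq_add (φ a) ih

def quadraticModuleSpan (g : ι → R) : Set R :=
  {p | ∃ (s₀ : R) (s : ι → R), IsSumSq s₀ ∧ (∀ i, IsSumSq (s i)) ∧ p = s₀ + ∑ i, s i * g i}

theorem isQuadraticModule_quadraticModuleSpan (g : ι → R) :
    IsQuadraticModule (quadraticModuleSpan g) where
  add_mem := by
    rintro _ _ ⟨s₀, s, hs₀, hs, rfl⟩ ⟨t₀, t, ht₀, ht, rfl⟩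
    refine ⟨s₀ + t₀, s + t, hs₀.add ht₀, fun i => (hs i).add (ht i), ?_⟩
    simp only [Pi.add_apply, add_mul, Finset.sum_add_distrib]
    ring
  mul_mem := by
    rintro σ _ hσ ⟨s₀, s, hs₀, hs, rfl⟩
    refine ⟨σ * s₀, σ • s, hσ.mul hs₀, fun i => hσ.mul (hs i), ?_⟩
    simp only [Pi.smul_apply, smul_eq_mul, mul_add, Finset.mul_sum, mul_assoc]
  one_mem := ⟨1, 0, .one, fun _ => .zero, by simp⟩

theorem mem_quadraticModuleSpan [DecidableEq ι] (g : ι → R) (i : ι) :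
    g i ∈ quadraticModuleSpan g :=
  ⟨0, Pi.single i 1, .zero, fun j => by rcases eq_or_ne j i with rfl | h <;> simp [*],
    by simp [Pi.single_apply]⟩

theorem map_nonneg_of_mem_quadraticModuleSpan {F : Type*} [FunLike F R ℝ] [RingHomClass F R ℝ]
    (φ : F) {g : ι → R} (hg : ∀ i, 0 ≤ φ (g i)) {p : R} (hp : p ∈ quadraticModuleSpan g) :
    0 ≤ φ p := by
  obtain ⟨s₀, s, hs₀, hs, rfl⟩ := hp
  rw [map_add, map_sum]
  exact add_nonneg (hs₀.map φ).nonneg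
    (Finset.sum_nonneg fun i _ => by rw [map_mul]; exact mul_nonneg ((hs i).map φ).nonneg (hg i))

end CommRing

section RealAlgebra

variable {R : Type*} [CommRing R] [Algebra ℝ R]

theorem IsSumSq.algebraMap_of_nonneg {c : ℝ} (hc : 0 ≤ c) : IsSumSq (c : R) := by
  rw [← Real.mul_self_sqrt hc, algebraMap.coe_mul]
  exact IsSumSq.mul_self _

def IsArchimedean (M : Set R) : Prop :=
  ∀ p : R, ∃ N : ℝ, (N : R) - p ∈ M

theorem IsArchimedean.mono {M M' : Set R} (h : IsArchimedean M) (hMM' : M ⊆ M') :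
    IsArchimedean M' :=
  fun p => (h p).imp fun _ hN => hMM' hN

namespace IsQuadraticModule

variable {M : Set R}

theorem algebraMap_mem (hM : IsQuadraticModule M) {c : ℝ} (hc : 0 ≤ c) : (c : R) ∈ M :=
  hM.mem_of_isSumSq (.algebraMap_of_nonneg hc)

theorem algebraMap_mul_mem (hM : IsQuadraticModule M) {c : ℝ} (hc : 0 ≤ c) {x : R}
    (hx : x ∈ M) : (c : R) * x ∈ M :=
  hM.mul_mem (.algebraMap_of_nonneg hc) hx

theorem add_algebraMap_mem (hM : IsQuadraticModule M) {c : ℝ} (hc : 0 ≤ c) {x : R}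
    (hx : x ∈ M) : x + (c : R) ∈ M :=
  hM.add_mem hx (hM.algebraMap_mem hc)

theorem exists_nonneg_sub_mem (hM : IsQuadraticModule M) {x : R}
    (h : ∃ N : ℝ, (N : R) - x ∈ M) : ∃ N : ℝ, 0 ≤ N ∧ (N : R) - x ∈ M := by
  obtain ⟨N, hN⟩ := h
  refine ⟨max N 0, le_max_right _ _, ?_⟩
  have h : ((max N 0 : ℝ) : R) - x = ((N : R) - x) + ((max N 0 - N : ℝ) : R) := by
    push_cast; ring
  rw [h]
  exact hM.add_algebraMap_mem (sub_nonneg.2 (le_max_left _ _)) hN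

theorem mem_of_algebraMap_mul_mem (hM : IsQuadraticModule M) {c : ℝ} (hc : 0 < c) {x : R}
    (hx : (c : R) * x ∈ M) : x ∈ M := by
  have h := hM.algebraMap_mul_mem (inv_nonneg.2 hc.le) hx
  rwa [← mul_assoc, ← algebraMap.coe_mul, inv_mul_cancel₀ hc.ne', algebraMap.coe_one,
    one_mul] at h

end IsQuadraticModule

/-- For a quadratic module `M` these form a subring containing `ℝ`, so `M` is Archimedean as soon
as they include generators of `R`. -/
def boundedElements (M : Set R) : Set R :=
  {p | ∃ N : ℝ, (N : R) - p ^ 2 ∈ M}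

namespace IsQuadraticModule

variable {M : Set R}

theorem algebraMap_mem_boundedElements (hM : IsQuadraticModule M) (c : ℝ) :
    (c : R) ∈ boundedElements M :=
  ⟨c ^ 2, by simpa using hM.zero_mem⟩

theorem add_mem_boundedElements (hM : IsQuadraticModule M) {p q : R}
    (hp : p ∈ boundedElements M) (hq : q ∈ boundedElements M) :
    p + q ∈ boundedElements M := by
  obtain ⟨N₁, hN₁⟩ := hp
  obtain ⟨N₂, hN₂⟩ := hq
  refine ⟨2 * N₁ + 2 * N₂, ?_⟩
  have h : ((2 * N₁ + 2 * N₂ : ℝ) : R) - (p + q) ^ 2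
      = ((2 : ℝ) : R) * ((N₁ : R) - p ^ 2) + ((2 : ℝ) : R) * ((N₂ : R) - q ^ 2) + (p - q) ^ 2 := by
    push_cast [map_ofNat]; ring
  rw [h]
  exact hM.add_mem (hM.add_mem (hM.algebraMap_mul_mem zero_le_two hN₁)
    (hM.algebraMap_mul_mem zero_le_two hN₂)) (hM.sq_mem _)

theorem mul_mem_boundedElements (hM : IsQuadraticModule M) {p q : R}
    (hp : p ∈ boundedElements M) (hq : q ∈ boundedElements M) :
    p * q ∈ boundedElements M := by
  obtain ⟨N₁, hN₁, hp⟩ := hM.exists_nonneg_sub_mem hp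
  obtain ⟨N₂, hq⟩ := hq
  refine ⟨N₁ * N₂, ?_⟩
  have h : ((N₁ * N₂ : ℝ) : R) - (p * q) ^ 2
      = q ^ 2 * ((N₁ : R) - p ^ 2) + (N₁ : R) * ((N₂ : R) - q ^ 2) := by
    push_cast; ring
  rw [h]
  exact hM.add_mem (hM.sq_mul_mem q hp) (hM.algebraMap_mul_mem hN₁ hq)

theorem isArchimedean_of_forall_mem_boundedElements (hM : IsQuadraticModule M)
    (h : ∀ p, p ∈ boundedElements M) : IsArchimedean M := by
  intro p
  obtain ⟨N, hN₀, hN⟩ := hM.exists_nonneg_sub_mem (h p)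
  refine ⟨N + 1, hM.mem_of_algebraMap_mul_mem two_pos ?_⟩
  have h : ((2 : ℝ) : R) * (((N + 1 : ℝ) : R) - p)
      = ((N : R) - p ^ 2) + (p - 1) ^ 2 + ((N + 1 : ℝ) : R) := by
    push_cast [map_ofNat]; ring
  rw [h]
  exact hM.add_algebraMap_mem (by linarith) (hM.add_mem hN (hM.sq_mem _))

end IsQuadraticModule

structure IsArchimedeanSemiordering (T : Set R) : Prop extends IsQuadraticModule T where
  neg_one_notMem : (-1 : R) ∉ T
  isArchimedean : IsArchimedean T
  mem_or_neg_mem (p : R) : p ∈ T ∨ -p ∈ T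

/-- For an Archimedean semiordering `T` this is an `ℝ`-algebra homomorphism `R → ℝ`. -/
noncomputable def supValue (T : Set R) (p : R) : ℝ :=
  sInf {r : ℝ | (r : R) - p ∈ T}

namespace IsArchimedeanSemiordering

variable {T : Set R}

theorem nonneg_of_algebraMap_mem (hT : IsArchimedeanSemiordering T) {c : ℝ}
    (hc : (c : R) ∈ T) : 0 ≤ c := by
  by_contra! hneg
  apply hT.neg_one_notMem
  have h := hT.algebraMap_mul_mem (inv_nonneg.2 (neg_nonneg.2 hneg.le)) hc
  rwa [← algebraMap.coe_mul, inv_mul_eq_div, div_neg, div_self hneg.ne, algebraMap.coe_neg,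
    algebraMap.coe_one] at h

theorem bddBelow_setOf_sub_mem (hT : IsArchimedeanSemiordering T) (p : R) :
    BddBelow {r : ℝ | (r : R) - p ∈ T} := by
  obtain ⟨N, hN⟩ := hT.isArchimedean (-p)
  refine ⟨-N, fun r hr => ?_⟩
  have h : ((r + N : ℝ) : R) = ((r : R) - p) + ((N : R) - -p) := by push_cast; ring
  have := hT.nonneg_of_algebraMap_mem (h ▸ hT.add_mem hr hN)
  linarith

theorem supValue_le (hT : IsArchimedeanSemiordering T) {p : R} {r : ℝ} (h : (r : R) - p ∈ T) :
    supValue T p ≤ r :=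
  csInf_le (hT.bddBelow_setOf_sub_mem p) h

theorem sub_mem_of_supValue_lt (hT : IsArchimedeanSemiordering T) {p : R} {r : ℝ}
    (h : supValue T p < r) : (r : R) - p ∈ T := by
  obtain ⟨N, hN⟩ := hT.isArchimedean p
  obtain ⟨r', hr', hlt⟩ := (csInf_lt_iff (hT.bddBelow_setOf_sub_mem p) ⟨N, hN⟩).1 h
  have h : (r : R) - p = ((r' : R) - p) + ((r - r' : ℝ) : R) := by push_cast; ring
  rw [h]
  exact hT.add_algebraMap_mem (by linarith) hr'

theorem supValue_nonneg (hT : IsArchimedeanSemiordering T) {p : R} (hp : p ∈ T) :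
    0 ≤ supValue T p := by
  obtain ⟨N, hN⟩ := hT.isArchimedean p
  refine le_csInf ⟨N, hN⟩ fun r hr => hT.nonneg_of_algebraMap_mem ?_
  simpa using hT.add_mem hr hp

theorem supValue_algebraMap (hT : IsArchimedeanSemiordering T) (c : ℝ) :
    supValue T (c : R) = c := by
  refine le_antisymm (hT.supValue_le (by simpa using hT.zero_mem)) ?_
  refine le_csInf ⟨c, by simpa using hT.zero_mem⟩ fun r hr => ?_
  have := hT.nonneg_of_algebraMap_mem (c := r - c) (by push_cast; exact hr)
  linarith

theorem supValue_zero (hT : IsArchimedeanSemiordering T) : supValue T 0 = 0 := by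
  simpa using hT.supValue_algebraMap 0

theorem supValue_add_le (hT : IsArchimedeanSemiordering T) (p q : R) :
    supValue T (p + q) ≤ supValue T p + supValue T q := by
  refine le_of_forall_gt_imp_ge_of_dense fun a ha => hT.supValue_le ?_
  obtain ⟨r, s, hr, hs, rfl⟩ : ∃ r s, supValue T p < r ∧ supValue T q < s ∧ a = r + s :=
    ⟨(a + supValue T p - supValue T q) / 2, (a - supValue T p + supValue T q) / 2,
      by linarith, by linarith, by ring⟩
  have h : ((r + s : ℝ) : R) - (p + q) = ((r : R) - p) + ((s : R) - q) := by push_cast; ring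
  rw [h]
  exact hT.add_mem (hT.sub_mem_of_supValue_lt hr) (hT.sub_mem_of_supValue_lt hs)

theorem supValue_algebraMap_mul_le (hT : IsArchimedeanSemiordering T) {c : ℝ} (hc : 0 < c) (p : R) :
    supValue T ((c : R) * p) ≤ c * supValue T p := by
  refine le_of_forall_gt_imp_ge_of_dense fun a ha => hT.supValue_le ?_
  have h : (a : R) - (c : R) * p = (c : R) * (((a / c : ℝ) : R) - p) := by
    rw [mul_sub, ← algebraMap.coe_mul, mul_div_cancel₀ _ hc.ne']
  rw [h]
  exact hT.algebraMap_mul_mem hc.le (hT.sub_mem_of_supValue_lt ((lt_div_iff₀' hc).2 ha))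

theorem supValue_neg (hT : IsArchimedeanSemiordering T) (p : R) :
    supValue T (-p) = -supValue T p := by
  have hle := hT.supValue_add_le p (-p)
  rw [add_neg_cancel, hT.supValue_zero] at hle
  refine le_antisymm ?_ (by linarith)
  refine le_neg.1 (le_of_forall_lt_imp_le_of_dense fun γ hγ => ?_)
  have hnot : (γ : R) - p ∉ T := fun h => (hT.supValue_le h).not_gt hγ
  have hmem : ((-γ : ℝ) : R) - -p ∈ T := by
    simpa [sub_eq_neg_add, add_comm] using (hT.mem_or_neg_mem _).resolve_left hnot
  linarith [hT.supValue_le hmem]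

theorem supValue_add (hT : IsArchimedeanSemiordering T) (p q : R) :
    supValue T (p + q) = supValue T p + supValue T q := by
  refine le_antisymm (hT.supValue_add_le p q) ?_
  have h := hT.supValue_add_le (p + q) (-q)
  rw [add_neg_cancel_right, hT.supValue_neg] at h
  linarith

theorem supValue_algebraMap_mul (hT : IsArchimedeanSemiordering T) (c : ℝ) (p : R) :
    supValue T ((c : R) * p) = c * supValue T p := by
  have hpos {c : ℝ} (hc : 0 < c) : supValue T ((c : R) * p) = c * supValue T p := by
    refine le_antisymm (hT.supValue_algebraMap_mul_le hc p) ?_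
    have h := hT.supValue_algebraMap_mul_le (inv_pos.2 hc) ((c : R) * p)
    rw [← mul_assoc, ← algebraMap.coe_mul, inv_mul_cancel₀ hc.ne', algebraMap.coe_one,
      one_mul] at h
    rwa [le_inv_mul_iff₀ hc] at h
  rcases lt_trichotomy c 0 with hc | rfl | hc
  · rw [← neg_neg c, algebraMap.coe_neg, neg_mul, hT.supValue_neg, hpos (neg_pos.2 hc)]
    ring
  · simp [hT.supValue_zero]
  · exact hpos hc

theorem supValue_mul_sq_le_zero (hT : IsArchimedeanSemiordering T) {b : R}
    (hb : supValue T b = 0) (q : R) : supValue T (b * q ^ 2) ≤ 0 := by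
  have hq := hT.supValue_nonneg (hT.sq_mem q)
  refine le_of_forall_pos_le_add fun ε hε => ?_
  set δ := ε / (supValue T (q ^ 2) + 1)
  have hδ : 0 < δ := by positivity
  have hmem : q ^ 2 * ((δ : R) - b) ∈ T :=
    hT.sq_mul_mem q (hT.sub_mem_of_supValue_lt (hb ▸ hδ))
  have h : q ^ 2 * ((δ : R) - b) = (δ : R) * q ^ 2 + -(b * q ^ 2) := by ring
  have hnonneg := hT.supValue_nonneg hmem
  rw [h, hT.supValue_add, hT.supValue_algebraMap_mul, hT.supValue_neg] at hnonneg
  have hδq : δ * supValue T (q ^ 2) ≤ ε := by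
    rw [div_mul_eq_mul_div, div_le_iff₀ (by positivity)]
    nlinarith
  linarith

theorem supValue_mul_eq_zero (hT : IsArchimedeanSemiordering T) {b : R}
    (hb : supValue T b = 0) (x : R) : supValue T (b * x) = 0 := by
  have hsq (q : R) : supValue T (b * q ^ 2) = 0 := by
    refine le_antisymm (hT.supValue_mul_sq_le_zero hb q) ?_
    have h := hT.supValue_mul_sq_le_zero (b := -b) (by rw [hT.supValue_neg, hb, neg_zero]) q
    rwa [neg_mul, hT.supValue_neg, neg_nonpos] at h
  have h : ((4 : ℝ) : R) * (b * x) = b * (x + 1) ^ 2 + -(b * (x - 1) ^ 2) := by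
    push_cast [map_ofNat]; ring
  have h4 := congrArg (supValue T) h
  rw [hT.supValue_algebraMap_mul, hT.supValue_add, hT.supValue_neg, hsq, hsq] at h4
  linarith

theorem supValue_mul (hT : IsArchimedeanSemiordering T) (p q : R) :
    supValue T (p * q) = supValue T p * supValue T q := by
  have hb : supValue T (p + -(supValue T p : R)) = 0 := by
    rw [hT.supValue_add, hT.supValue_neg, hT.supValue_algebraMap, add_neg_cancel]
  have h := hT.supValue_mul_eq_zero hb q
  rw [add_mul, neg_mul, hT.supValue_add, hT.supValue_neg, hT.supValue_algebraMap_mul] at h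
  linarith

theorem exists_algHom_nonneg (hT : IsArchimedeanSemiordering T) :
    ∃ φ : R →ₐ[ℝ] ℝ, ∀ p ∈ T, 0 ≤ φ p :=
  ⟨{ toFun := supValue T
     map_one' := by simpa using hT.supValue_algebraMap 1
     map_mul' := hT.supValue_mul
     map_zero' := hT.supValue_zero
     map_add' := hT.supValue_add
     commutes' := hT.supValue_algebraMap }, fun _ => hT.supValue_nonneg⟩

end IsArchimedeanSemiordering

namespace IsQuadraticModule

variable {M T : Set R}

theorem isArchimedeanSemiordering_of_maximal
    (hT : Maximal (fun T : Set R => IsQuadraticModule T ∧ (-1 : R) ∉ T) T)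
    (harch : IsArchimedean T) : IsArchimedeanSemiordering T := by
  obtain ⟨hTqm, hT₁⟩ := hT.1
  refine ⟨hTqm, hT₁, harch, fun b => ?_⟩
  by_contra! ⟨hb, hnb⟩
  obtain ⟨s₁, hs₁, t₁, ht₁, h₁⟩ := neg_one_mem_sumSqAdjoin_of_maximal hT hb
  obtain ⟨s₂, hs₂, t₂, ht₂, h₂⟩ := neg_one_mem_sumSqAdjoin_of_maximal hT hnb
  obtain ⟨κ, hκ₀, hκ⟩ := hTqm.exists_nonneg_sub_mem (harch (-b))
  have hsum : -(t₁ + t₂) ∈ T := by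
    have h : -(t₁ + t₂) = t₂ * s₁ + t₁ * s₂ := by linear_combination t₂ * h₁ + t₁ * h₂
    exact h ▸ hTqm.add_mem (hTqm.mul_mem ht₂ hs₁) (hTqm.mul_mem ht₁ hs₂)
  have hbt : t₁ * b ∈ T := by
    have h : t₁ * b = t₁ * ((κ : R) - -b) + ((κ : R) * -(t₁ + t₂) + (κ : R) * t₂) := by ring
    rw [h]
    exact hTqm.add_mem (hTqm.mul_mem ht₁ hκ) (hTqm.add_mem (hTqm.algebraMap_mul_mem hκ₀ hsum)
      (hTqm.mem_of_isSumSq ((IsSumSq.algebraMap_of_nonneg hκ₀).mul ht₂)))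
  exact hT₁ (h₁ ▸ hTqm.add_mem hs₁ hbt)

theorem exists_algHom_nonneg (hM : IsQuadraticModule M) (hM₁ : (-1 : R) ∉ M)
    (harch : IsArchimedean M) : ∃ φ : R →ₐ[ℝ] ℝ, ∀ p ∈ M, 0 ≤ φ p := by
  obtain ⟨T, hMT, hT⟩ := hM.exists_maximal_proper hM₁
  obtain ⟨φ, hφ⟩ := (isArchimedeanSemiordering_of_maximal hT (harch.mono hMT)).exists_algHom_nonneg
  exact ⟨φ, fun p hp => hφ p (hMT hp)⟩

end IsQuadraticModule

theorem IsQuadraticModule.preorderingSpan_subset {M : Set R} (hM : IsQuadraticModule M)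
    {t w : R} (ht : t ∈ M) (hw : w ∈ M) {κ : ℝ} (hκ : 0 < κ) (htw : t + w = κ) :
    preorderingSpan t w ⊆ M := by
  rintro x ⟨σ₀, σ₁, σ₂, σ₃, h₀, h₁, h₂, h₃, rfl⟩
  have hinv : ((κ⁻¹ : ℝ) : R) * κ = 1 := by
    rw [← algebraMap.coe_mul, inv_mul_cancel₀ hκ.ne', algebraMap.coe_one]
  have hmix : σ₃ * (t * w) = ((κ⁻¹ : ℝ) : R) * ((σ₃ * w ^ 2) * t + (σ₃ * t ^ 2) * w) := by
    linear_combination (-(σ₃ * t * w)) * hinv - (σ₃ * t * w * ((κ⁻¹ : ℝ) : R)) * htw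
  rw [hmix]
  refine hM.add_mem (hM.add_mem (hM.add_mem (hM.mem_of_isSumSq h₀) (hM.mul_mem h₁ ht))
    (hM.mul_mem h₂ hw)) (hM.algebraMap_mul_mem (by positivity) (hM.add_mem ?_ ?_))
  · exact hM.mul_mem (h₃.mul (by simp [sq])) ht
  · exact hM.mul_mem (h₃.mul (by simp [sq])) hw

noncomputable def newtonInvSqrt (y p₀ : R) : ℕ → R
  | 0 => p₀
  | n + 1 => ((2⁻¹ : ℝ) : R) * (newtonInvSqrt y p₀ n * (3 - y * newtonInvSqrt y p₀ n ^ 2))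

noncomputable def newtonErrorStep (e : R) : R :=
  ((4⁻¹ : ℝ) : R) * (e ^ 2 * (3 + e))

theorem one_sub_mul_newtonInvSqrt_sq (y p₀ : R) (n : ℕ) :
    1 - y * newtonInvSqrt y p₀ n ^ 2 = newtonErrorStep^[n] (1 - y * p₀ ^ 2) := by
  induction n with
  | zero => rfl
  | succ n ih =>
    rw [Function.iterate_succ_apply', ← ih, newtonErrorStep, newtonInvSqrt]
    have h₂ : ((2⁻¹ : ℝ) : R) ^ 2 = ((4⁻¹ : ℝ) : R) := by
      rw [← algebraMap.coe_pow]; norm_num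
    have h₄ : ((4⁻¹ : ℝ) : R) * 4 = 1 := by
      rw [← map_ofNat (algebraMap ℝ R) 4, ← algebraMap.coe_mul]; norm_num
    set P := newtonInvSqrt y p₀ n
    linear_combination (-(y * P ^ 2 * (3 - y * P ^ 2) ^ 2)) * h₂ - h₄

theorem algebraMap_newtonErrorStep_iterate (n : ℕ) (b : ℝ) :
    ((newtonErrorStep^[n] b : ℝ) : R) = newtonErrorStep^[n] (b : R) := by
  refine Function.Semiconj.iterate_right (fun b => ?_) n b
  simp only [newtonErrorStep]
  push_cast [map_ofNat]
  rfl

theorem newtonErrorStep_iterate_mem_preorderingSpan {t w e : R}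
    (he : e ∈ preorderingSpan t w) (n : ℕ) : newtonErrorStep^[n] e ∈ preorderingSpan t w := by
  induction n with
  | zero => exact he
  | succ n ih =>
    rw [Function.iterate_succ_apply']
    exact mul_mem_preorderingSpan (mem_preorderingSpan_of_isSumSq (.algebraMap_of_nonneg
      (by norm_num))) (mul_mem_preorderingSpan (mem_preorderingSpan_of_isSumSq (by simp [sq]))
      (add_mem_preorderingSpan (mem_preorderingSpan_of_isSumSq (IsSumSq.natCast 3)) ih))

theorem newtonErrorStep_iterate_sub_mem_preorderingSpan {t w x e : R}
    (hx : x ∈ preorderingSpan t w) (he : e ∈ preorderingSpan t w)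
    (hxe : x - e ∈ preorderingSpan t w) (n : ℕ) :
    newtonErrorStep^[n] x - newtonErrorStep^[n] e ∈ preorderingSpan t w := by
  induction n with
  | zero => exact hxe
  | succ n ih =>
    set x' := newtonErrorStep^[n] x
    set e' := newtonErrorStep^[n] e
    have hx' := newtonErrorStep_iterate_mem_preorderingSpan hx n
    have he' := newtonErrorStep_iterate_mem_preorderingSpan he n
    have h : newtonErrorStep x' - newtonErrorStep e'
        = ((4⁻¹ : ℝ) : R) * ((x' - e') * (3 * (x' + e') + (x' ^ 2 + x' * e' + e' ^ 2))) := by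
      simp only [newtonErrorStep]; ring
    rw [Function.iterate_succ_apply', Function.iterate_succ_apply', h]
    have h3 : (3 : R) ∈ preorderingSpan t w := mem_preorderingSpan_of_isSumSq (IsSumSq.natCast 3)
    refine mul_mem_preorderingSpan (mem_preorderingSpan_of_isSumSq (.algebraMap_of_nonneg
      (by norm_num))) (mul_mem_preorderingSpan ih (add_mem_preorderingSpan
        (mul_mem_preorderingSpan h3 (add_mem_preorderingSpan hx' he')) ?_))
    exact add_mem_preorderingSpan (add_mem_preorderingSpan
      (mem_preorderingSpan_of_isSumSq (by simp [sq])) (mul_mem_preorderingSpan hx' he'))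
      (mem_preorderingSpan_of_isSumSq (by simp [sq]))

theorem newtonErrorStep_real (x : ℝ) : newtonErrorStep x = 4⁻¹ * (x ^ 2 * (3 + x)) := rfl

theorem newtonErrorStep_iterate_pos {b : ℝ} (hb : 0 < b) (n : ℕ) :
    0 < newtonErrorStep^[n] b := by
  induction n with
  | zero => exact hb
  | succ n ih =>
    rw [Function.iterate_succ_apply', newtonErrorStep_real]
    positivity

theorem newtonErrorStep_iterate_le_pow {b : ℝ} (hb₀ : 0 < b) (hb₁ : b ≤ 1) (n : ℕ) :
    newtonErrorStep^[n] b ≤ b ^ (n + 1) := by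
  induction n with
  | zero => simp
  | succ n ih =>
    rw [Function.iterate_succ_apply', newtonErrorStep_real]
    set x := newtonErrorStep^[n] b
    have hx₀ : 0 ≤ x := (newtonErrorStep_iterate_pos hb₀ n).le
    have hxb : x ≤ b := ih.trans (pow_le_of_le_one hb₀.le hb₁ n.succ_ne_zero)
    have hx₁ : x ≤ 1 := hxb.trans hb₁
    calc 4⁻¹ * (x ^ 2 * (3 + x)) ≤ x * b := by nlinarith [mul_le_mul_of_nonneg_left hxb hx₀]
      _ ≤ b ^ (n + 1) * b := by gcongr
      _ = b ^ (n + 1 + 1) := (pow_succ _ _).symm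

theorem exists_newtonErrorStep_iterate_le {b δ : ℝ} (hb₀ : 0 < b) (hb₁ : b < 1) (hδ : 0 < δ) :
    ∃ n, 0 < newtonErrorStep^[n] b ∧ newtonErrorStep^[n] b ≤ δ := by
  obtain ⟨n, hn⟩ := exists_pow_lt_of_lt_one hδ hb₁
  exact ⟨n, newtonErrorStep_iterate_pos hb₀ n, ((newtonErrorStep_iterate_le_pow hb₀ hb₁.le n).trans
    (pow_le_pow_of_le_one hb₀.le hb₁.le n.le_succ)).trans hn.le⟩

theorem sq_sub_sq_newtonErrorStep_iterate_mem_preorderingSpan {t w e : R} {b : ℝ} (hb : 0 ≤ b)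
    (he : e ∈ preorderingSpan t w) (hbe : (b : R) - e ∈ preorderingSpan t w) (n : ℕ) :
    ((newtonErrorStep^[n] b : ℝ) : R) ^ 2 - (newtonErrorStep^[n] e) ^ 2
      ∈ preorderingSpan t w := by
  rw [algebraMap_newtonErrorStep_iterate, sq_sub_sq]
  have hb' := mem_preorderingSpan_of_isSumSq (t := t) (w := w) (.algebraMap_of_nonneg hb)
  exact mul_mem_preorderingSpan
    (add_mem_preorderingSpan (newtonErrorStep_iterate_mem_preorderingSpan hb' n)
      (newtonErrorStep_iterate_mem_preorderingSpan he n))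
    (newtonErrorStep_iterate_sub_mem_preorderingSpan hb' he hbe n)

namespace IsQuadraticModule

variable {M : Set R}

theorem exists_sq_sub_sq_mem (hM : IsQuadraticModule M) (harch : IsArchimedean M) {t : R}
    (ht : t ∈ M) {δ : ℝ} (hδ : 0 < δ) :
    ∃ η : ℝ, 0 < η ∧ η ≤ δ ∧ ∃ P : R, (η : R) ^ 2 - (1 - (1 + t) * P ^ 2) ^ 2 ∈ M := by
  obtain ⟨κ, hκ₀, hκ⟩ := hM.exists_nonneg_sub_mem (harch t)
  set w : R := ((κ + 1 : ℝ) : R) - t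
  have hw : w ∈ M := by
    have h : w = ((κ : R) - t) + ((1 : ℝ) : R) := by simp only [w]; push_cast; ring
    exact h ▸ hM.add_algebraMap_mem zero_le_one hκ
  have hC := hM.preorderingSpan_subset ht hw (by positivity : (0 : ℝ) < κ + 1)
    (by simp only [w]; ring)
  -- start at `p₀ = L^(-1/2)` with `L = κ + 2`; the initial error is `w / L`, bounded by `1 - 1/L`
  set L : ℝ := κ + 2
  have hL : 0 < L := by positivity
  set b : ℝ := 1 - L⁻¹
  have hb₀ : 0 < b := sub_pos.2 (inv_lt_one_of_one_lt₀ (by linarith))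
  have hb₁ : b < 1 := sub_lt_self _ (inv_pos.2 hL)
  set p₀ : R := (((√L)⁻¹ : ℝ) : R)
  have hp₀ : p₀ ^ 2 = ((L⁻¹ : ℝ) : R) := by
    rw [← algebraMap.coe_pow, inv_pow, Real.sq_sqrt hL.le]
  have hLinv : ((L⁻¹ : ℝ) : R) * L = 1 := by
    rw [← algebraMap.coe_mul, inv_mul_cancel₀ hL.ne', algebraMap.coe_one]
  have he₀ : 1 - (1 + t) * p₀ ^ 2 ∈ preorderingSpan t w := by
    refine ⟨0, 0, ((L⁻¹ : ℝ) : R), 0, .zero, .zero, .algebraMap_of_nonneg (by positivity),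
      .zero, ?_⟩
    have hLw : (L : R) = ((κ + 1 : ℝ) : R) + 1 := by simp only [L]; push_cast [map_ofNat]; ring
    rw [hp₀]
    linear_combination (-1 : R) * hLinv + ((L⁻¹ : ℝ) : R) * hLw
  have hbe₀ : (b : R) - (1 - (1 + t) * p₀ ^ 2) ∈ preorderingSpan t w := by
    refine ⟨0, ((L⁻¹ : ℝ) : R), 0, 0, .zero, .algebraMap_of_nonneg (by positivity), .zero,
      .zero, ?_⟩
    rw [hp₀]
    simp only [b]
    push_cast
    ring
  obtain ⟨n, hn₀, hnδ⟩ := exists_newtonErrorStep_iterate_le hb₀ hb₁ hδ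
  refine ⟨newtonErrorStep^[n] b, hn₀, hnδ, newtonInvSqrt (1 + t) p₀ n, hC ?_⟩
  rw [one_sub_mul_newtonInvSqrt_sq]
  exact sq_sub_sq_newtonErrorStep_iterate_mem_preorderingSpan hb₀.le he₀ hbe₀ n

theorem add_algebraMap_mem_of_mul_eq (hM : IsQuadraticModule M) (harch : IsArchimedean M)
    {a σ t : R} (hσ : IsSumSq σ) (ht : t ∈ M) (h : a * σ = 1 + t) {ε : ℝ} (hε : 0 < ε) :
    a + (ε : R) ∈ M := by
  obtain ⟨c₁, hc₁, h₁⟩ := hM.exists_nonneg_sub_mem (harch a)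
  obtain ⟨c₂, hc₂, h₂⟩ := hM.exists_nonneg_sub_mem (harch (-a))
  set c := c₁ + c₂
  have hca : (c : R) - a ∈ M := by
    have h : (c : R) - a = ((c₁ : R) - a) + (c₂ : R) := by simp only [c]; push_cast; ring
    exact h ▸ hM.add_algebraMap_mem hc₂ h₁
  have hac : (c : R) + a ∈ M := by
    have h : (c : R) + a = ((c₂ : R) - -a) + (c₁ : R) := by simp only [c]; push_cast; ring
    exact h ▸ hM.add_algebraMap_mem hc₁ h₂
  obtain ⟨η, hη, hηδ, P, hP⟩ := hM.exists_sq_sub_sq_mem harch ht (δ := ε / (c + 1))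
    (by positivity)
  have hcη : c * η ≤ ε := by
    rw [le_div_iff₀ (by positivity)] at hηδ
    nlinarith
  set E := 1 - (1 + t) * P ^ 2
  -- with `E` small, `a = a σ P² + a E` and the error term `a E` is absorbed by `c ± a ∈ M`
  have key : ((4 * η : ℝ) : R) * (a + ε)
      = ((4 * η : ℝ) : R) * σ * (a * P) ^ 2 + (E + η) ^ 2 * (c + a) + (E - η) ^ 2 * (c - a)
        + ((2 * c : ℝ) : R) * ((η : R) ^ 2 - E ^ 2) + ((4 * η * (ε - c * η) : ℝ) : R) := by
    simp only [E]
    push_cast [map_ofNat]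
    linear_combination (-(4 * (η : R) * a * P ^ 2)) * h
  refine hM.mem_of_algebraMap_mul_mem (c := 4 * η) (by positivity) (key ▸ ?_)
  refine hM.add_mem (hM.add_mem (hM.add_mem (hM.add_mem ?_ (hM.sq_mul_mem _ hac))
    (hM.sq_mul_mem _ hca)) (hM.algebraMap_mul_mem (by positivity) hP))
    (hM.algebraMap_mem (by nlinarith))
  exact hM.mem_of_isSumSq (((IsSumSq.algebraMap_of_nonneg (by positivity)).mul hσ).mul
    (by simp [sq]))

/-- Jacobi's representation theorem, in its `ε`-form. -/
theorem add_algebraMap_mem_of_forall_algHom_nonneg (hM : IsQuadraticModule M)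
    (harch : IsArchimedean M) {a : R}
    (ha : ∀ φ : R →ₐ[ℝ] ℝ, (∀ p ∈ M, 0 ≤ φ p) → 0 ≤ φ a) {ε : ℝ} (hε : 0 < ε) :
    a + (ε : R) ∈ M := by
  set a' := a + ((ε / 2 : ℝ) : R)
  have hneg : (-1 : R) ∈ sumSqAdjoin M (-a') := by
    by_contra h
    obtain ⟨φ, hφ⟩ := (isQuadraticModule_sumSqAdjoin hM _).exists_algHom_nonneg h
      (harch.mono (subset_sumSqAdjoin M _))
    have h₁ := hφ _ (mem_sumSqAdjoin_self hM _)
    have h₂ := ha φ fun p hp => hφ p (subset_sumSqAdjoin M _ hp)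
    simp only [a', map_neg, map_add, AlgHom.commutes, Algebra.algebraMap_self,
      RingHom.id_apply] at h₁
    linarith
  obtain ⟨s, hs, σ, hσ, h⟩ := hneg
  have h' := hM.add_algebraMap_mem_of_mul_eq (a := a') harch hσ hs (by linear_combination h)
    (half_pos hε)
  have h : a' + ((ε / 2 : ℝ) : R) = a + (ε : R) := by
    simp only [a']; rw [add_assoc, ← algebraMap.coe_add, add_halves]
  rwa [h] at h'

end IsQuadraticModule

end RealAlgebra

theorem MvPolynomial.algHom_apply_eq_eval {σ : Type*} (φ : MvPolynomial σ ℝ →ₐ[ℝ] ℝ)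
    (p : MvPolynomial σ ℝ) :
    φ p = eval (fun i => φ (X i)) p := by
  conv_lhs => rw [aeval_unique φ]
  rw [← coe_aeval_eq_eval]
  rfl

section Polynomial

variable {σ ι : Type*} [Fintype σ] [Fintype ι] {g : ι → MvPolynomial σ ℝ}

theorem IsQuadraticModule.isArchimedean_of_sub_sum_sq_mem {M : Set (MvPolynomial σ ℝ)}
    (hM : IsQuadraticModule M) {N : ℝ}
    (hN : C N - ∑ j, X j ^ 2 ∈ M) : IsArchimedean M := by
  classical
  have hX (i : σ) : X i ∈ boundedElements M := by
    refine ⟨N, show C N - X i ^ 2 ∈ M from ?_⟩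
    have h : C N - X i ^ 2 = (C N - ∑ j, X j ^ 2) + ∑ j ∈ Finset.univ.erase i, X j ^ 2 := by
      rw [← Finset.add_sum_erase _ _ (Finset.mem_univ i)]; ring
    rw [h]
    exact hM.add_mem hN (hM.mem_of_isSumSq (IsSumSq.sum_sq _ _))
  refine hM.isArchimedean_of_forall_mem_boundedElements fun p => ?_
  induction p using MvPolynomial.induction_on with
  | C a => simpa using hM.algebraMap_mem_boundedElements a
  | add p q hp hq => exact hM.add_mem_boundedElements hp hq
  | mul_X p i hp => exact hM.mul_mem_boundedElements hp (hX i)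

theorem isCompact_setOf_forall_eval_nonneg {N : ℝ}
    (hN : C N - ∑ j, X j ^ 2 ∈ quadraticModuleSpan g) :
    IsCompact {u : σ → ℝ | ∀ i, 0 ≤ eval u (g i)} := by
  refine (isCompact_univ_pi fun _ => isCompact_Icc (a := -√N) (b := √N)).of_isClosed_subset ?_
    fun u hu j _ => ?_
  · simp only [Set.ofPred_forall]
    exact isClosed_iInter fun i => isClosed_le continuous_const (continuous_eval _)
  · have h := map_nonneg_of_mem_quadraticModuleSpan (eval u) hu hN
    simp only [map_sub, map_sum, map_pow, eval_C, eval_X, sub_nonneg] at h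
    exact abs_le.1 (Real.abs_le_sqrt ((Finset.single_le_sum (fun j _ => sq_nonneg (u j))
      (Finset.mem_univ j)).trans h))

/-- Putinar's Positivstellensatz (in its `ε`-form). -/
theorem sub_C_mem_quadraticModuleSpan_of_forall_le {N : ℝ}
    (hN : C N - ∑ j, X j ^ 2 ∈ quadraticModuleSpan g) {f : MvPolynomial σ ℝ} {c : ℝ}
    (hf : ∀ u, (∀ i, 0 ≤ eval u (g i)) → c ≤ eval u f) {ε : ℝ} (hε : 0 < ε) :
    f - C (c - ε) ∈ quadraticModuleSpan g := by
  classical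
  have hM := isQuadraticModule_quadraticModuleSpan g
  have h := hM.add_algebraMap_mem_of_forall_algHom_nonneg
    (hM.isArchimedean_of_sub_sum_sq_mem hN) (a := f - C c) (fun φ hφ => ?_) hε
  · convert h using 1
    rw [map_sub]
    change _ = _ + C ε
    ring
  · have hu : ∀ i, 0 ≤ eval (fun j => φ (X j)) (g i) := fun i => by
      rw [← MvPolynomial.algHom_apply_eq_eval φ]; exact hφ _ (mem_quadraticModuleSpan g i)
    rw [MvPolynomial.algHom_apply_eq_eval φ, map_sub, eval_C, sub_nonneg]
    exact hf _ hu

end Polynomial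

/-- Under the Archimedean condition, the supremum of the SOS lower bounds of `f`
equals the minimum of `f` over the (compact, nonempty) set `D`, which is attained. -/
theorem sos_bounds_converge_to_minimum {k m : ℕ} (g : Fin m → MvPolynomial (Fin k) ℝ)
    (harch : ∃ (N : ℝ) (s₀ : MvPolynomial (Fin k) ℝ) (s : Fin m → MvPolynomial (Fin k) ℝ),
      IsSOS s₀ ∧ (∀ i, IsSOS (s i)) ∧
      C N - ∑ j : Fin k, X j ^ 2 = s₀ + ∑ i, s i * g i)
    (hne : ∃ u : Fin k → ℝ, ∀ i, 0 ≤ eval u (g i))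
    (f : MvPolynomial (Fin k) ℝ) :
    ∃ u₀ : Fin k → ℝ, (∀ i, 0 ≤ eval u₀ (g i)) ∧
      (∀ u : Fin k → ℝ, (∀ i, 0 ≤ eval u (g i)) → eval u₀ f ≤ eval u f) ∧
      sSup {lam : ℝ | ∃ (s₀ : MvPolynomial (Fin k) ℝ) (s : Fin m → MvPolynomial (Fin k) ℝ),
          IsSOS s₀ ∧ (∀ i, IsSOS (s i)) ∧ f - C lam = s₀ + ∑ i, s i * g i}
        = eval u₀ f := by
  simp only [isSOS_iff_isSumSq] at harch ⊢
  obtain ⟨N, hN⟩ := harch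
  have hM := isQuadraticModule_quadraticModuleSpan g
  obtain ⟨u₀, hu₀, hmin⟩ := (isCompact_setOf_forall_eval_nonneg hN).exists_isMinOn hne
    (continuous_eval f).continuousOn
  refine ⟨u₀, hu₀, fun u hu => hmin hu, ?_⟩
  change sSup {lam : ℝ | f - C lam ∈ quadraticModuleSpan g} = _
  refine csSup_eq_of_forall_le_of_forall_lt_exists_gt ?_ (fun lam hlam => ?_) (fun w hw => ?_)
  · obtain ⟨N', hN'⟩ := hM.isArchimedean_of_sub_sum_sq_mem hN (-f)
    exact ⟨-N', by simpa [sub_eq_add_neg, add_comm] using hN'⟩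
  · simpa [sub_nonneg] using map_nonneg_of_mem_quadraticModuleSpan (eval u₀) hu₀ hlam
  · refine ⟨eval u₀ f - (eval u₀ f - w) / 2, sub_C_mem_quadraticModuleSpan_of_forall_le hN
      (fun u hu => hmin hu) (by linarith), by linarith⟩
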